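/- For n >= 1, the coefficient of z^{n+1} in the formal power series ((1-v^2)/v) * sum_{h>=1} v^{2h}/(1-v^{2h}), where z = v/(1+v+v^2), equals sum_{h>=1} d(h) * [ T(n, n+2-2h) - 2*T(n, n-2h) + T(n, n-2-2h) ], where T(n,k) is the trinomial coefficient [v^k](1+v+v^2)^n and d(h) is the divisor function. -/

import Mathlib

open PowerSeries Finset

/-- Composition `f(a)` of formal power series, for `a` with zero constant term:
the `n`-th coefficient only depends on the truncation of `f` below degree `n+1`. -/
noncomputable def PowerSeries.comp (f a : PowerSeries ℚ) : PowerSeries ℚ :=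
  PowerSeries.mk fun n => coeff n (Polynomial.aeval a (trunc (n + 1) f))

/-- The trinomial coefficient `T(n,k) = [v^k](1+v+v²)^n`, with `T(n,k) = 0` for `k < 0`. -/
noncomputable def trinom (n : ℕ) (k : ℤ) : ℚ :=
  if k < 0 then 0 else coeff k.toNat ((1 + X + X ^ 2) ^ n)

/-! With `φ = 1 + v + v²` and `w` the compositional inverse of `z = v / φ`, Lagrange inversion
reads `[z^N] F(w) = [v^N] F · (φ - v φ') · φ^(N-1)`: both sides are linear functionals of `F` that
only see `F` modulo `v^(N+1)`, both send `z^k` to `δ_{kN}`, and the powers `z^k` span everything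
modulo `v^(N+1)`. For the right-hand side the key point is that `[v^j] (φ - v φ') φ^(j-1)` is
`[v^j]` of `φ^j - v (φ^j)' / j`, which is `0`.

Here `φ - v φ' = 1 - v²`, so the coefficient sought is `[v^(n+1)] S · (1 - v²)² φ^n` with
`S = ∑ v^(2h-1) / (1 - v^(2h))`. Below degree `2n+3` this Lambert-type series equals
`∑ d(m) v^(2m-1)`, and expanding `(1 - v²)² = 1 - 2v² + v⁴` produces the trinomial coefficients. -/

theorem Nat.filter_dvd_Icc_eq_divisors {m M : ℕ} (hm : m ≠ 0) (hmM : m ≤ M) :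
    {h ∈ Icc 1 M | h ∣ m} = m.divisors := by
  ext h
  simp only [mem_filter, mem_Icc, Nat.mem_divisors]
  constructor
  · rintro ⟨-, hd⟩
    exact ⟨hd, hm⟩
  · rintro ⟨hd, -⟩
    exact ⟨⟨Nat.pos_of_dvd_of_pos hd (by omega), (Nat.le_of_dvd (by omega) hd).trans hmM⟩, hd⟩

namespace PowerSeries

variable {K : Type*} [Field K]

section LagrangeInversion

theorem exists_sum_C_mul_pow_add_X_pow_mul {u : K⟦X⟧} (hu : constantCoeff u ≠ 0) (F : K⟦X⟧)
    (N : ℕ) :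
    ∃ (c : ℕ → K) (G : K⟦X⟧), F = ∑ k ∈ range N, C (c k) * (X * u) ^ k + X ^ N * G := by
  induction N with
  | zero => exact ⟨0, F, by simp⟩
  | succ N ih =>
    obtain ⟨c, G, hF⟩ := ih
    set a := constantCoeff G / constantCoeff u ^ N
    obtain ⟨G', hG'⟩ : X ∣ G - C a * u ^ N := X_dvd_iff.mpr (by simp [a, hu])
    refine ⟨Function.update c N a, G', ?_⟩
    rw [sum_range_succ, Function.update_self,
      sum_congr rfl fun k hk => by rw [Function.update_of_ne (mem_range.mp hk).ne], hF,
      eq_add_of_sub_eq hG']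
    ring

variable [CharZero K]

theorem coeff_succ_sub_X_mul_derivative_mul_pow (φ : K⟦X⟧) (j : ℕ) :
    coeff (j + 1) ((φ - X * d⁄dX K φ) * φ ^ j) = 0 := by
  have h : C ((j : K) + 1) * ((φ - X * d⁄dX K φ) * φ ^ j) =
      C ((j : K) + 1) * φ ^ (j + 1) - X * d⁄dX K (φ ^ (j + 1)) := by
    rw [derivative_pow, Nat.add_sub_cancel, map_add, map_natCast, map_one, Nat.cast_succ]
    ring
  have hc := congrArg (coeff (j + 1)) h
  rw [coeff_C_mul, map_sub, coeff_C_mul, coeff_succ_X_mul, coeff_derivative] at hc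
  exact (mul_eq_zero.mp (hc.trans (by ring))).resolve_left (Nat.cast_add_one_ne_zero j)

theorem coeff_X_mul_inv_pow_mul_sub_X_mul_derivative_mul_pow {φ : K⟦X⟧}
    (hφ : constantCoeff φ ≠ 0) (k m : ℕ) :
    coeff (m + 1) ((X * φ⁻¹) ^ k * ((φ - X * d⁄dX K φ) * φ ^ m)) =
      coeff (m + 1) (X ^ k : K⟦X⟧) := by
  have hinv := PowerSeries.inv_mul_cancel φ hφ
  rw [coeff_X_pow]
  rcases le_or_gt k m with hkm | hmk
  · obtain ⟨j, rfl⟩ := Nat.exists_eq_add_of_le hkm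
    have h : (X * φ⁻¹) ^ k * ((φ - X * d⁄dX K φ) * φ ^ (k + j)) =
        X ^ k * ((φ - X * d⁄dX K φ) * φ ^ j) * (φ⁻¹ * φ) ^ k := by ring
    rw [h, hinv, one_pow, mul_one, add_assoc, coeff_X_pow_mul',
      if_pos (Nat.le_add_right k _), Nat.add_sub_cancel_left,
      coeff_succ_sub_X_mul_derivative_mul_pow, if_neg (by omega)]
  rcases (Nat.succ_le_of_lt hmk).lt_or_eq with hmk | rfl
  · rw [mul_pow, mul_assoc, coeff_X_pow_mul', if_neg (by omega), if_neg (by omega)]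
  · have h : (X * φ⁻¹) ^ (m + 1) * ((φ - X * d⁄dX K φ) * φ ^ m) =
        X ^ (m + 1) * (φ⁻¹ * (φ - X * d⁄dX K φ)) * (φ⁻¹ * φ) ^ m := by ring
    rw [h, hinv, one_pow, mul_one, coeff_X_pow_mul', if_pos le_rfl, Nat.sub_self,
      coeff_zero_eq_constantCoeff, map_mul, map_sub, map_mul, constantCoeff_X, zero_mul,
      sub_zero, constantCoeff_inv, inv_mul_cancel₀ hφ, if_pos rfl]

theorem coeff_subst_eq_coeff_mul_sub_X_mul_derivative_mul_pow {φ w : K⟦X⟧}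
    (hφ : constantCoeff φ ≠ 0) (hw0 : constantCoeff w = 0) (hw : (X * φ⁻¹).subst w = X)
    (F : K⟦X⟧) (N : ℕ) :
    coeff (N + 1) (F.subst w) = coeff (N + 1) (F * ((φ - X * d⁄dX K φ) * φ ^ N)) := by
  obtain ⟨c, G, rfl⟩ :=
    exists_sum_C_mul_pow_add_X_pow_mul (u := φ⁻¹) (by simpa using hφ) F (N + 2)
  have hs := HasSubst.of_constantCoeff_zero' hw0
  have hσz : substAlgHom hs (X * φ⁻¹) = X := by rw [coe_substAlgHom, hw]
  have hσC (a : K) : substAlgHom hs (C a) = C a := by rw [coe_substAlgHom, subst_C]; rfl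
  have hXN (P : K⟦X⟧) : coeff (N + 1) (X ^ (N + 2) * P) = 0 := by
    rw [coeff_X_pow_mul', if_neg (by omega)]
  have hwN (P : K⟦X⟧) : coeff (N + 1) (w ^ (N + 2) * P) = 0 :=
    X_pow_dvd_iff.mp (dvd_mul_of_dvd_left (pow_dvd_pow_of_dvd (X_dvd_iff.mpr hw0) _) _) _
      (by omega)
  rw [← coe_substAlgHom hs, map_add, map_mul, map_pow, substAlgHom_X, map_add, hwN, add_mul,
    map_add, mul_assoc, hXN, sum_mul]
  simp only [map_sum]
  refine congrArg (· + 0) (sum_congr rfl fun k _ => ?_)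
  rw [map_mul, map_pow, hσz, hσC, coeff_C_mul, mul_assoc, coeff_C_mul,
    coeff_X_mul_inv_pow_mul_sub_X_mul_derivative_mul_pow hφ]

end LagrangeInversion

theorem inv_one_sub_X_pow_eq_expand {c : ℕ} (hc : c ≠ 0) :
    (1 - X ^ c : K⟦X⟧)⁻¹ = expand c hc (mk 1) := by
  rw [inv_eq_iff_mul_eq_one (by simp [zero_pow hc]), ← expand_X c hc, ← map_one (expand c hc),
    ← map_sub, ← map_mul, mk_one_mul_one_sub_eq_one, map_one]

theorem coeff_X_pow_pred_mul_inv_one_sub_X_pow {c : ℕ} (hc : c ≠ 0) (j : ℕ) :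
    coeff j (X ^ (c - 1) * (1 - X ^ c : K⟦X⟧)⁻¹) = if c ∣ j + 1 then 1 else 0 := by
  have hinv := PowerSeries.mul_inv_cancel (1 - X ^ c : K⟦X⟧) (by simp [zero_pow hc])
  have hX : X * (X ^ (c - 1) * (1 - X ^ c : K⟦X⟧)⁻¹) = (1 - X ^ c)⁻¹ - 1 := by
    rw [← mul_assoc, ← pow_succ', Nat.sub_add_cancel (Nat.one_le_iff_ne_zero.mpr hc)]
    linear_combination -hinv
  rw [← coeff_succ_X_mul, hX, map_sub, coeff_one, if_neg j.succ_ne_zero, sub_zero,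
    inv_one_sub_X_pow_eq_expand hc, coeff_expand]
  simp

theorem coeff_sum_X_pow_mul_inv_one_sub_X_pow (M j : ℕ) :
    coeff j (∑ h ∈ Icc 1 M, X ^ (2 * h - 1) * (1 - X ^ (2 * h))⁻¹ : K⟦X⟧) =
      #{h ∈ Icc 1 M | 2 * h ∣ j + 1} := by
  rw [map_sum, ← sum_boole (R := K)]
  exact sum_congr rfl fun h hh =>
    coeff_X_pow_pred_mul_inv_one_sub_X_pow (by simp at hh; omega) j

theorem trunc_sum_X_pow_mul_inv_one_sub_X_pow (M : ℕ) :
    trunc (2 * M + 1) (∑ h ∈ Icc 1 M, X ^ (2 * h - 1) * (1 - X ^ (2 * h))⁻¹ : K⟦X⟧) =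
      trunc (2 * M + 1) (∑ m ∈ Icc 1 M, C (#m.divisors : K) * X ^ (2 * m - 1)) := by
  ext j
  rw [coeff_trunc, coeff_trunc]
  split_ifs with hj
  swap
  · rfl
  rw [coeff_sum_X_pow_mul_inv_one_sub_X_pow, map_sum]
  simp only [coeff_C_mul, coeff_X_pow]
  rcases Nat.even_or_odd (j + 1) with ⟨m, hm⟩ | hodd
  · rw [sum_eq_single m (fun b _ hbm => by rw [if_neg (by omega), mul_zero])
      (fun hm' => by simp at hm'; omega), if_pos (by omega), mul_one]
    have hdvd (h : ℕ) : 2 * h ∣ j + 1 ↔ h ∣ m := by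
      rw [hm, ← two_mul, Nat.mul_dvd_mul_iff_left two_pos]
    simp only [hdvd, Nat.filter_dvd_Icc_eq_divisors (by omega : m ≠ 0) (by omega : m ≤ M)]
  · rw [filter_false_of_mem fun h _ hdvd =>
      hodd.not_two_dvd_nat ((dvd_mul_right 2 h).trans hdvd), card_empty, Nat.cast_zero]
    refine (sum_eq_zero fun m hm => ?_).symm
    rw [if_neg, mul_zero]
    intro hjm
    simp only [mem_Icc] at hm
    exact hodd.not_two_dvd_nat ⟨m, by omega⟩

theorem comp_eq_subst {f a : ℚ⟦X⟧} (ha : constantCoeff a = 0) : f.comp a = f.subst a := by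
  have hs := HasSubst.of_constantCoeff_zero' ha
  ext n
  rw [comp, coeff_mk, ← subst_coe hs, coeff_subst' hs, coeff_subst' hs]
  refine finsum_congr fun d => ?_
  rw [Polynomial.coeff_coe, coeff_trunc]
  split_ifs with hd
  · rfl
  · rw [X_pow_dvd_iff.mp (pow_dvd_pow_of_dvd (X_dvd_iff.mpr ha) d) n (by omega), smul_zero,
      smul_zero]

theorem one_add_X_add_X_sq_sub_X_mul_derivative :
    (1 + X + X ^ 2 : ℚ⟦X⟧) - X * d⁄dX ℚ (1 + X + X ^ 2) = 1 - X ^ 2 := by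
  rw [map_add, map_add, derivative_pow, derivative_X, Derivation.map_one_eq_zero]
  ring

end PowerSeries

theorem trinom_natCast_sub (n K j : ℕ) :
    trinom n (K - j) = coeff K (X ^ j * (1 + X + X ^ 2) ^ n) := by
  rw [coeff_X_pow_mul', trinom]
  split_ifs with h₁ h₂ h₂
  · omega
  · rfl
  · rw [show ((K : ℤ) - j).toNat = K - j by omega]
  · omega

theorem trinom_combination_eq_coeff (n : ℕ) {h : ℕ} (hh : h ≠ 0) :
    trinom n ((n : ℤ) + 2 - 2 * h) - 2 * trinom n ((n : ℤ) - 2 * h) +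
        trinom n ((n : ℤ) - 2 - 2 * h) =
      coeff (n + 1) (X ^ (2 * h - 1) * ((1 - X ^ 2) ^ 2 * (1 + X + X ^ 2) ^ n)) := by
  obtain ⟨h, rfl⟩ := Nat.exists_eq_succ_of_ne_zero hh
  have e₀ : (n : ℤ) + 2 - 2 * ↑(h + 1) = ↑(n + 1) - ↑(2 * h + 1) := by push_cast; ring
  have e₂ : (n : ℤ) - 2 * ↑(h + 1) = ↑(n + 1) - ↑(2 * h + 3) := by push_cast; ring
  have e₄ : (n : ℤ) - 2 - 2 * ↑(h + 1) = ↑(n + 1) - ↑(2 * h + 5) := by push_cast; ring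
  rw [e₀, e₂, e₄, trinom_natCast_sub, trinom_natCast_sub, trinom_natCast_sub,
    show 2 * (h + 1) - 1 = 2 * h + 1 by omega,
    show (X ^ (2 * h + 1) * ((1 - X ^ 2) ^ 2 * (1 + X + X ^ 2) ^ n) : ℚ⟦X⟧) =
      X ^ (2 * h + 1) * (1 + X + X ^ 2) ^ n - C 2 * (X ^ (2 * h + 3) * (1 + X + X ^ 2) ^ n) +
        X ^ (2 * h + 5) * (1 + X + X ^ 2) ^ n by rw [map_ofNat]; ring,
    map_add, map_sub, coeff_C_mul]

theorem coeff_via_trinomials_general (n : ℕ)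
    (w : PowerSeries ℚ) (hw0 : constantCoeff w = 0)
    (hw : PowerSeries.comp (X * (1 + X + X ^ 2)⁻¹) w = X) :
    coeff (n + 1) (PowerSeries.comp
        ((1 - X ^ 2) * ∑ h ∈ Icc 1 (n + 1), X ^ (2 * h - 1) * (1 - X ^ (2 * h))⁻¹) w) =
      ∑ h ∈ Icc 1 (n + 1), (Nat.divisors h).card *
        (trinom n ((n : ℤ) + 2 - 2 * h) - 2 * trinom n ((n : ℤ) - 2 * h) +
          trinom n ((n : ℤ) - 2 - 2 * h)) := by
  rw [comp_eq_subst hw0] at hw ⊢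
  rw [coeff_subst_eq_coeff_mul_sub_X_mul_derivative_mul_pow (by simp) hw0 hw,
    one_add_X_add_X_sq_sub_X_mul_derivative]
  set S := (∑ h ∈ Icc 1 (n + 1), X ^ (2 * h - 1) * (1 - X ^ (2 * h))⁻¹ : ℚ⟦X⟧)
  set Q := ((1 - X ^ 2) ^ 2 * (1 + X + X ^ 2) ^ n : ℚ⟦X⟧)
  calc coeff (n + 1) ((1 - X ^ 2) * S * ((1 - X ^ 2) * (1 + X + X ^ 2) ^ n))
      = coeff (n + 1) (S * Q) := congrArg _ (by ring)
    _ = coeff (n + 1) ((∑ m ∈ Icc 1 (n + 1), C (#m.divisors : ℚ) * X ^ (2 * m - 1)) * Q) := by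
      have hlt : n + 1 < 2 * (n + 1) + 1 := by omega
      rw [coeff_mul_eq_coeff_trunc_mul_trunc _ _ hlt, trunc_sum_X_pow_mul_inv_one_sub_X_pow,
        ← coeff_mul_eq_coeff_trunc_mul_trunc _ _ hlt]
    _ = _ := by
      rw [sum_mul, map_sum]
      refine sum_congr rfl fun h hh => ?_
      rw [mul_assoc, coeff_C_mul,
        trinom_combination_eq_coeff n (by simp only [mem_Icc] at hh; omega)]

/-- For `n ≥ 1`, the coefficient of `z^{n+1}` in `((1-v²)/v)·∑_{h≥1} v^{2h}/(1-v^{2h})`,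
re-expanded in `z` via the substitution `z = v/(1+v+v²)` (i.e. composed with the
compositional inverse `w = v(z)` of `v ↦ v/(1+v+v²)`), equals
`∑_{h≥1} d(h)·[T(n,n+2-2h) - 2T(n,n-2h) + T(n,n-2-2h)]`.
Both sums are truncated at `h = n+1`, beyond which all terms are irrelevant:
`(1/v)·v^{2h}/(1-v^{2h})` is written `v^{2h-1}/(1-v^{2h})`, of order `2h-1 > n+1`
for `h > n+1`, and the trinomial terms vanish for `2h > n+2`. -/
theorem coeff_via_trinomials (n : ℕ) (hn : 1 ≤ n)
    (w : PowerSeries ℚ) (hw0 : constantCoeff w = 0)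
    (hw : PowerSeries.comp (X * (1 + X + X ^ 2)⁻¹) w = X) :
    coeff (n + 1) (PowerSeries.comp
        ((1 - X ^ 2) * ∑ h ∈ Icc 1 (n + 1), X ^ (2 * h - 1) * (1 - X ^ (2 * h))⁻¹) w) =
      ∑ h ∈ Icc 1 (n + 1), (Nat.divisors h).card *
        (trinom n ((n : ℤ) + 2 - 2 * h) - 2 * trinom n ((n : ℤ) - 2 * h) +
          trinom n ((n : ℤ) - 2 - 2 * h)) :=
  coeff_via_trinomials_general n w hw0 hw
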